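/- arXiv:0812.5039 — 2 statements merged into one kernel-verified Lean document; each statement's English description precedes it below -/
import Mathlib

section
/- Let d ≥ 1 be an integer, let X ⊆ ℝ^d be a point set, and let x ∈ ℝ^d. Then x ∈ sconv(X) if and only if for every j = 0, 1, …, d, the set X contains a point of type j with respect to x. -/
noncomputable def stairPath : (d : ℕ) → (Fin d → ℝ) → (Fin d → ℝ) → Set (Fin d → ℝ)
  | 0, _, _ => Set.univ
  | (d+1), a, b =>
    if a (Fin.last d) ≤ b (Fin.last d) then
      segment ℝ a (Fin.snoc (Fin.init a) (b (Fin.last d))) ∪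
        (fun z => Fin.snoc z (b (Fin.last d))) '' stairPath d (Fin.init a) (Fin.init b)
    else
      segment ℝ b (Fin.snoc (Fin.init b) (a (Fin.last d))) ∪
        (fun z => Fin.snoc z (a (Fin.last d))) '' stairPath d (Fin.init b) (Fin.init a)

def StairConvex {d : ℕ} (S : Set (Fin d → ℝ)) : Prop :=
  ∀ a ∈ S, ∀ b ∈ S, stairPath d a b ⊆ S

/-- The stair-convex hull: the intersection of all stair-convex sets containing `X`. -/
def sconv {d : ℕ} (X : Set (Fin d → ℝ)) : Set (Fin d → ℝ) :=
  ⋂₀ {S : Set (Fin d → ℝ) | StairConvex S ∧ X ⊆ S}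

/-- `b` has type `j` with respect to `a` (coordinates being 1-based, so the `j`-th
coordinate of a point `p : Fin d → ℝ` is `p ⟨j-1, _⟩`).  Type `0`: `b i ≤ a i` for all `i`.
Type `j ≥ 1`: `b_j ≥ a_j` and `b_i ≤ a_i` for all `i = j+1, …, d`. -/
def HasTypeWrt {d : ℕ} (a b : Fin d → ℝ) : ℕ → Prop
  | 0 => ∀ i : Fin d, b i ≤ a i
  | (j+1) => ∃ hj : j < d, a ⟨j, hj⟩ ≤ b ⟨j, hj⟩ ∧ ∀ i : Fin d, j < (i : ℕ) → b i ≤ a i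

/-! Necessity: for each `j` the points `p` admitting some `b ∈ X` of type `j` with respect to `p`
form a stair-convex set, since every point of `σ(a, c)` inherits such a witness from `a` or
from `c`; this set contains `X`, hence `sconv X`.

Sufficiency, by induction on `d`, for any stair-convex `S`: a witness `c` of type `d` lies
above `x` in the last coordinate, so for `j < d` the stair-path from a witness `b` of type `j` to
`c` passes through `(b_1, …, b_{d-1}, x_d)`. These points lie in the slice of `S` at height `x_d`,
which is stair-convex in dimension `d - 1`, and they witness every type for
`(x_1, …, x_{d-1})`. -/
theorem segment_snoc_init {𝕜 M : Type*} [Semiring 𝕜] [PartialOrder 𝕜] [AddCommMonoid M]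
    [Module 𝕜 M] {n : ℕ} (a : Fin (n + 1) → M) (s : M) :
    segment 𝕜 a (Fin.snoc (Fin.init a) s) =
      Fin.snoc (Fin.init a) '' segment 𝕜 (a (Fin.last n)) s := by
  have h : (Fin.snoc (Fin.init a) : M → Fin (n + 1) → M) = Function.update a (Fin.last n) := by
    ext r : 1
    rw [← Fin.update_snoc_last (x := a (Fin.last n)), Fin.snoc_init_self]
  rw [h, Pi.image_update_segment, Function.update_eq_self, ← h]

section StairPath

variable {n : ℕ} {a c : Fin (n + 1) → ℝ}

theorem stairPath_succ_of_le (h : a (Fin.last n) ≤ c (Fin.last n)) :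
    stairPath (n + 1) a c = Fin.snoc (Fin.init a) '' Set.Icc (a (Fin.last n)) (c (Fin.last n)) ∪
      (fun z => Fin.snoc z (c (Fin.last n))) '' stairPath n (Fin.init a) (Fin.init c) := by
  rw [stairPath, if_pos h, segment_snoc_init, segment_eq_Icc h]

theorem stairPath_succ_comm_of_lt (h : c (Fin.last n) < a (Fin.last n)) :
    stairPath (n + 1) a c = stairPath (n + 1) c a := by
  rw [stairPath, stairPath, if_neg h.not_ge, if_pos h.le]

theorem snoc_init_mem_stairPath {t : ℝ} (hat : a (Fin.last n) ≤ t) (htc : t ≤ c (Fin.last n)) :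
    Fin.snoc (Fin.init a) t ∈ stairPath (n + 1) a c := by
  rw [stairPath_succ_of_le (hat.trans htc)]
  exact Or.inl ⟨t, ⟨hat, htc⟩, rfl⟩

theorem StairConvex.preimage_snoc {S : Set (Fin (n + 1) → ℝ)} (hS : StairConvex S) (t : ℝ) :
    StairConvex {z : Fin n → ℝ | Fin.snoc z t ∈ S} := by
  intro z hz w hw q hq
  apply hS _ hz _ hw
  rw [stairPath_succ_of_le (by simp)]
  exact Or.inr ⟨q, by simpa using hq, by simp⟩

end StairPath

section HasTypeWrt

variable {d n j : ℕ}

theorem HasTypeWrt.le {a b : Fin d → ℝ} (h : HasTypeWrt a b j) : j ≤ d := by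
  cases j with
  | zero => exact Nat.zero_le d
  | succ k => exact h.1

theorem hasTypeWrt_self (a : Fin d → ℝ) (hj : j ≤ d) : HasTypeWrt a a j := by
  cases j with
  | zero => exact fun _ => le_rfl
  | succ k => exact ⟨hj, le_rfl, fun _ _ => le_rfl⟩

theorem hasTypeWrt_snoc_iff {q : Fin n → ℝ} {t : ℝ} {b : Fin (n + 1) → ℝ} (hj : j ≤ n) :
    HasTypeWrt (Fin.snoc q t) b j ↔ HasTypeWrt q (Fin.init b) j ∧ b (Fin.last n) ≤ t := by
  cases j with
  | zero => simp [HasTypeWrt, Fin.forall_fin_succ', Fin.init]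
  | succ k =>
    have hk : k < n := hj
    simp [HasTypeWrt, Fin.forall_fin_succ', Fin.init, Fin.snoc, hk, hk.le, and_assoc]

theorem hasTypeWrt_iff_init {a b : Fin (n + 1) → ℝ} (hj : j ≤ n) :
    HasTypeWrt a b j ↔
      HasTypeWrt (Fin.init a) (Fin.init b) j ∧ b (Fin.last n) ≤ a (Fin.last n) := by
  conv_lhs => rw [← Fin.snoc_init_self a]
  exact hasTypeWrt_snoc_iff hj

theorem hasTypeWrt_top_iff {a b : Fin (n + 1) → ℝ} :
    HasTypeWrt a b (n + 1) ↔ a (Fin.last n) ≤ b (Fin.last n) := by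
  exact ⟨fun ⟨_, h, _⟩ => h, fun h => ⟨n.lt_succ_self, h, fun i hi => absurd i.isLt (by omega)⟩⟩

end HasTypeWrt

theorem hasTypeWrt_or_of_mem_stairPath {d j : ℕ} {a c b b' p : Fin d → ℝ}
    (hb : HasTypeWrt a b j) (hb' : HasTypeWrt c b' j) (hp : p ∈ stairPath d a c) :
    HasTypeWrt p b j ∨ HasTypeWrt p b' j := by
  induction d generalizing j with
  | zero => exact Or.inl (Subsingleton.elim a p ▸ hb)
  | succ n ih =>
    wlog hac : a (Fin.last n) ≤ c (Fin.last n) generalizing a c b b'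
    · have hca := not_le.1 hac
      rw [stairPath_succ_comm_of_lt hca] at hp
      exact (this hb' hb hp hca.le).symm
    rw [stairPath_succ_of_le hac] at hp
    obtain hj | rfl : j ≤ n ∨ j = n + 1 := by have := hb.le; omega
    · rw [hasTypeWrt_iff_init hj] at hb hb'
      rcases hp with ⟨r, hr, rfl⟩ | ⟨q, hq, rfl⟩
      · exact Or.inl ((hasTypeWrt_snoc_iff hj).2 ⟨hb.1, hb.2.trans hr.1⟩)
      · exact (ih hb.1 hb'.1 hq).imp (fun h => (hasTypeWrt_snoc_iff hj).2 ⟨h, hb.2.trans hac⟩)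
          (fun h => (hasTypeWrt_snoc_iff hj).2 ⟨h, hb'.2⟩)
    · rw [hasTypeWrt_top_iff] at hb'
      refine Or.inr (hasTypeWrt_top_iff.2 ?_)
      rcases hp with ⟨r, hr, rfl⟩ | ⟨q, hq, rfl⟩
      · simpa using hr.2.trans hb'
      · simpa using hb'

theorem stairConvex_setOf_exists_hasTypeWrt {d : ℕ} (X : Set (Fin d → ℝ)) (j : ℕ) :
    StairConvex {p | ∃ b ∈ X, HasTypeWrt p b j} := by
  rintro a ⟨b, hbX, hb⟩ c ⟨b', hb'X, hb'⟩ p hp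
  exact (hasTypeWrt_or_of_mem_stairPath hb hb' hp).elim (fun h => ⟨b, hbX, h⟩)
    fun h => ⟨b', hb'X, h⟩

theorem StairConvex.mem_of_forall_exists_hasTypeWrt {d : ℕ} {S : Set (Fin d → ℝ)}
    (hS : StairConvex S) {x : Fin d → ℝ} (h : ∀ j ≤ d, ∃ b ∈ S, HasTypeWrt x b j) : x ∈ S := by
  induction d with
  | zero =>
    obtain ⟨b, hbS, -⟩ := h 0 le_rfl
    rwa [Subsingleton.elim x b]
  | succ n ih =>
    obtain ⟨c, hcS, hc⟩ := h (n + 1) le_rfl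
    rw [hasTypeWrt_top_iff] at hc
    rw [← Fin.snoc_init_self x]
    refine ih (hS.preimage_snoc _) fun j hj => ?_
    obtain ⟨b, hbS, hb⟩ := h j (by omega)
    rw [hasTypeWrt_iff_init hj] at hb
    exact ⟨Fin.init b, hS _ hbS _ hcS (snoc_init_mem_stairPath hb.2 hc), hb.1⟩

theorem mem_sconv_iff_types_general (d : ℕ) (X : Set (Fin d → ℝ)) (x : Fin d → ℝ) :
    x ∈ sconv X ↔ ∀ j : ℕ, j ≤ d → ∃ b ∈ X, HasTypeWrt x b j := by
  constructor
  · intro hx j hj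
    exact Set.mem_sInter.1 hx _
      ⟨stairConvex_setOf_exists_hasTypeWrt X j, fun a ha => ⟨a, ha, hasTypeWrt_self a hj⟩⟩
  · rintro h S ⟨hS, hXS⟩
    exact hS.mem_of_forall_exists_hasTypeWrt fun j hj =>
      (h j hj).imp fun b hb => ⟨hXS hb.1, hb.2⟩

/-- A point `x` lies in the stair-convex hull of `X` iff `X` contains a point of type `j`
with respect to `x` for every `j = 0, 1, …, d`. -/
theorem mem_sconv_iff_types (d : ℕ) (hd : 1 ≤ d) (X : Set (Fin d → ℝ)) (x : Fin d → ℝ) :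
    x ∈ sconv X ↔ ∀ j : ℕ, j ≤ d → ∃ b ∈ X, HasTypeWrt x b j :=
  mem_sconv_iff_types_general d X x
end

section
/- Let d ≥ 1 and m ≥ 2 be integers, let S ⊆ [0,1]^d be a stair-convex set, and let g_S = |S ∩ Gu(m)| be the number of points of the uniform grid contained in S. Then |g_S − (m−1)^d · vol(S)| ≤ d · m^{d−1}, where vol denotes Lebesgue (outer) measure. -/
open Classical in
/-- The uniform grid `Gu(m) = {0, 1/(m-1), …, 1}^d` as a finite set. -/
noncomputable def uniformGrid (d m : ℕ) : Finset (Fin d → ℝ) :=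
  (Finset.univ : Finset (Fin d → Fin m)).image (fun f i => (f i : ℝ) / (m - 1))

/-! Cutting `S` at the heights `j/(m-1)` splits its grid count into the counts of `m` slices,
which are stair-convex subsets of the `(d-1)`-cube; by induction on `d` it remains to show
`|∑ⱼ vol(Sⱼ) - (m-1)·vol(S)| ≤ 1` for the slices `Sⱼ` at these heights. Stair-convexity makes
the slices grow with the height as long as some point of `S` lies higher, so the part of `S` in
the slab between two consecutive heights is squeezed between the cylinders over the two bounding
slices. Summing, the lower and upper bounds differ by a single boundary term, at most `1`.
Only cylinders are ever measured, so `S` need not be measurable. -/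

open MeasureTheory Set Function

lemma exists_threshold_of_antitone {P : ℕ → Prop} (hP : Antitone P) (h₀ : P 0) (N : ℕ) :
    ∃ k ≤ N, (∀ j ≤ k, P j) ∧ ∀ j ∈ Finset.Ioc k N, ¬P j := by
  classical
  exact ⟨Nat.findGreatest P N, Nat.findGreatest_le N,
    fun j hj => hP hj (Nat.findGreatest_spec (Nat.zero_le N) h₀),
    fun j hj => Nat.findGreatest_is_greatest (Finset.mem_Ioc.1 hj).1 (Finset.mem_Ioc.1 hj).2⟩

lemma abs_sum_range_sub_sum_range_le_one {a b : ℕ → ℝ} {k N : ℕ} (hkN : k ≤ N)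
    (ha₀ : 0 ≤ a 0) (hak : a k ≤ 1) (hbk₀ : 0 ≤ b k) (hbk : b k ≤ 1)
    (hab : ∀ j < k, a j ≤ b j) (hba : ∀ j < k, b j ≤ a (j + 1))
    (ha : ∀ j ∈ Finset.Ioc k N, a j = 0) (hb : ∀ j ∈ Finset.Ioc k N, b j = 0) :
    |∑ j ∈ Finset.range (N + 1), a j - ∑ j ∈ Finset.range (N + 1), b j| ≤ 1 := by
  have htrunc : ∀ c : ℕ → ℝ, (∀ j ∈ Finset.Ioc k N, c j = 0) →
      ∑ j ∈ Finset.range (N + 1), c j = ∑ j ∈ Finset.range (k + 1), c j := fun c hc =>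
    (Finset.sum_subset (Finset.range_subset_range.2 (by omega)) fun j hj hj' =>
      hc j (by simp only [Finset.mem_range, Finset.mem_Ioc] at hj hj' ⊢; omega)).symm
  have hle₁ := Finset.sum_le_sum fun j hj => hab j (Finset.mem_range.1 hj)
  have hle₂ := Finset.sum_le_sum fun j hj => hba j (Finset.mem_range.1 hj)
  rw [htrunc a ha, htrunc b hb, abs_le]
  constructor <;> linarith [Finset.sum_range_succ a k, Finset.sum_range_succ' a k,
    Finset.sum_range_succ b k]

lemma abs_sum_sub_mul_le {ι : Type*} (s : Finset ι) {c f : ι → ℝ} {q V B : ℝ} (hq : 0 ≤ q)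
    (hc : ∀ j ∈ s, |c j - q * f j| ≤ B) (hf : |∑ j ∈ s, f j - V| ≤ 1) :
    |∑ j ∈ s, c j - q * V| ≤ s.card * B + q :=
  calc |∑ j ∈ s, c j - q * V| = |∑ j ∈ s, (c j - q * f j) + q * (∑ j ∈ s, f j - V)| := by
        rw [Finset.sum_sub_distrib, ← Finset.mul_sum]; ring_nf
    _ ≤ |∑ j ∈ s, (c j - q * f j)| + |q * (∑ j ∈ s, f j - V)| := abs_add_le _ _
    _ ≤ s.card * B + q * 1 := by
        rw [abs_mul, abs_of_nonneg hq]
        gcongr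
        exact (Finset.abs_sum_le_sum_abs _ _).trans
          (by simpa using Finset.sum_le_card_nsmul s _ B hc)
    _ = s.card * B + q := by rw [mul_one]

lemma measure_eq_sum_inter {α ι : Type*} [MeasurableSpace α] (μ : Measure α) {E : ι → Set α}
    {T : Finset ι} (hd : (T : Set ι).Pairwise (Disjoint on E)) (hm : ∀ i, MeasurableSet (E i))
    {S : Set α} (hS : S ⊆ ⋃ i ∈ T, E i) : μ S = ∑ i ∈ T, μ (S ∩ E i) :=
  calc μ S = μ.restrict (⋃ i ∈ T, E i) S := by
        rw [Measure.restrict_apply' (T.measurableSet_biUnion fun i _ => hm i), inter_eq_left.2 hS]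
    _ = ∑ i ∈ T, μ (S ∩ E i) := by
        rw [Measure.restrict_biUnion_finset hd hm, Measure.sum_fintype, Measure.coe_finsetSum,
          Finset.sum_apply]
        simp_rw [Measure.restrict_apply' (hm _)]
        exact T.sum_coe_sort fun i => μ (S ∩ E i)

section

variable {n : ℕ}

lemma snoc_mem_segment (x : Fin n → ℝ) {s u t : ℝ} (hsu : s ≤ u) (hut : u ≤ t) :
    (Fin.snoc x u : Fin (n + 1) → ℝ) ∈ segment ℝ (Fin.snoc x s) (Fin.snoc x t) := by
  obtain ⟨a, b, ha, hb, hab, rfl⟩ : u ∈ segment ℝ s t := by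
    rw [segment_eq_Icc (hsu.trans hut)]; exact ⟨hsu, hut⟩
  refine ⟨a, b, ha, hb, hab, funext fun i => Fin.lastCases ?_ (fun i => ?_) i⟩
  · simp
  · simp [← add_mul, hab]

def slice (S : Set (Fin (n + 1) → ℝ)) (t : ℝ) : Set (Fin n → ℝ) :=
  {x | Fin.snoc x t ∈ S}

def snocProd (A : Set (Fin n → ℝ)) (I : Set ℝ) : Set (Fin (n + 1) → ℝ) :=
  {f | Fin.init f ∈ A ∧ f (Fin.last n) ∈ I}

lemma volume_snocProd (A : Set (Fin n → ℝ)) (I : Set ℝ) :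
    volume (snocProd A I) = volume A * volume I := by
  have he := volume_preserving_piFinSuccAbove (fun _ : Fin (n + 1) => ℝ) (Fin.last n)
  have : snocProd A I = MeasurableEquiv.piFinSuccAbove (fun _ => ℝ) (Fin.last n) ⁻¹' (I ×ˢ A) := by
    ext f
    simp [snocProd, MeasurableEquiv.piFinSuccAbove_apply, Fin.insertNthEquiv, Fin.removeNth_last,
      and_comm]
  rw [this, he.measure_preimage_equiv, Measure.volume_eq_prod, Measure.prod_prod, mul_comm]

lemma measurableSet_snocProd {A : Set (Fin n → ℝ)} {I : Set ℝ} (hA : MeasurableSet A)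
    (hI : MeasurableSet I) : MeasurableSet (snocProd A I) :=
  (measurable_pi_lambda _ (fun _ => measurable_pi_apply _) hA).inter (measurable_pi_apply _ hI)

lemma toReal_volume_snocProd_Ico (A : Set (Fin n → ℝ)) {a b : ℝ} (hab : a ≤ b) :
    (volume (snocProd A (Ico a b))).toReal = (volume A).toReal * (b - a) := by
  rw [volume_snocProd, Real.volume_Ico, ENNReal.toReal_mul,
    ENNReal.toReal_ofReal (sub_nonneg.2 hab)]

lemma volume_Icc_zero_one : volume (Icc (0 : Fin n → ℝ) 1) = 1 := by
  simp [Real.volume_Icc_pi]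

lemma toReal_volume_le_one {A : Set (Fin n → ℝ)} (hA : A ⊆ Icc 0 1) : (volume A).toReal ≤ 1 :=
  ENNReal.toReal_le_of_le_ofReal zero_le_one
    (by simpa [volume_Icc_zero_one] using measure_mono (μ := volume) hA)

lemma volume_ne_top_of_subset_Icc {A : Set (Fin n → ℝ)} (hA : A ⊆ Icc 0 1) : volume A ≠ ⊤ :=
  measure_ne_top_of_subset hA (by simp [volume_Icc_zero_one])

lemma toReal_volume_mul_le_of_snocProd_subset {A : Set (Fin n → ℝ)} {T : Set (Fin (n + 1) → ℝ)}
    {a b : ℝ} (hab : a ≤ b) (hT : volume T ≠ ⊤) (h : snocProd A (Ico a b) ⊆ T) :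
    (volume A).toReal * (b - a) ≤ (volume T).toReal :=
  toReal_volume_snocProd_Ico A hab ▸ ENNReal.toReal_mono hT (measure_mono h)

lemma toReal_volume_le_mul_of_subset_snocProd {A : Set (Fin n → ℝ)} {T : Set (Fin (n + 1) → ℝ)}
    {a b : ℝ} (hab : a ≤ b) (h : T ⊆ snocProd A (Ico a b)) (hA : volume A ≠ ⊤) :
    (volume T).toReal ≤ (volume A).toReal * (b - a) :=
  toReal_volume_snocProd_Ico A hab ▸ ENNReal.toReal_mono
    (by rw [volume_snocProd]; exact ENNReal.mul_ne_top hA (by simp)) (measure_mono h)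

lemma slice_subset_Icc {S : Set (Fin (n + 1) → ℝ)} (hS : S ⊆ Icc 0 1) (t : ℝ) :
    slice S t ⊆ Icc 0 1 := fun x hx =>
  ⟨fun i => by simpa using (hS hx).1 i.castSucc, fun i => by simpa using (hS hx).2 i.castSucc⟩

lemma inter_snocProd_subset_Icc {S : Set (Fin (n + 1) → ℝ)} (hS : S ⊆ Icc 0 1) (I : Set ℝ) :
    S ∩ snocProd univ I ⊆ snocProd (Icc 0 1) I := fun _ ⟨hf, _, hfI⟩ =>
  ⟨⟨fun _ => (hS hf).1 _, fun _ => (hS hf).2 _⟩, hfI⟩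

lemma volume_eq_sum_volume_inter_snocProd_Ico {N : ℕ} (hN : 0 < N) {S : Set (Fin (n + 1) → ℝ)}
    (hS : S ⊆ Icc 0 1) :
    volume S = ∑ j ∈ Finset.range (N + 1),
      volume (S ∩ snocProd univ (Ico ((j : ℝ) / N) ((j + 1 : ℕ) / N))) := by
  have hN' : (0 : ℝ) < N := by exact_mod_cast hN
  have hmono : Monotone fun j : ℕ => (j : ℝ) / N := fun i j h => by dsimp; gcongr
  apply measure_eq_sum_inter
  · intro _ _ _ _ hij
    refine Set.disjoint_left.2 fun f hi hj => Set.disjoint_left.1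
      (hmono.pairwise_disjoint_on_Ico_succ hij) hi.2 ?_
    simpa only [Order.succ_eq_add_one] using hj.2
  · exact fun j => measurableSet_snocProd MeasurableSet.univ measurableSet_Ico
  · intro f hf
    have h₀ : 0 ≤ f (Fin.last n) := (hS hf).1 _
    have h₁ : f (Fin.last n) ≤ 1 := (hS hf).2 _
    have hfloor := Nat.floor_le (mul_nonneg h₀ hN'.le)
    have hfloor' := Nat.lt_floor_add_one (f (Fin.last n) * N)
    refine Set.mem_biUnion (x := ⌊f (Fin.last n) * N⌋₊) ?_ ⟨trivial, ?_, ?_⟩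
    · exact Finset.mem_range.2 (Nat.lt_succ_of_le (Nat.floor_le_of_le (by nlinarith)))
    · rw [div_le_iff₀ hN']; exact hfloor
    · rw [lt_div_iff₀ hN']; push_cast; exact hfloor'

end

namespace StairConvex
variable {n : ℕ} {S : Set (Fin (n + 1) → ℝ)}

theorem slice_subset_slice (hS : StairConvex S) {p : Fin (n + 1) → ℝ} (hp : p ∈ S) {s u : ℝ}
    (hsu : s ≤ u) (hup : u ≤ p (Fin.last n)) : slice S s ⊆ slice S u := by
  intro x hx
  have hpath := hS _ hx _ hp
  rw [stairPath, if_pos (by simpa using hsu.trans hup)] at hpath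
  apply hpath
  left
  rw [Fin.init_snoc]
  exact snoc_mem_segment x hsu hup

protected theorem slice (hS : StairConvex S) (t : ℝ) : StairConvex (slice S t) := by
  intro a ha b hb z hz
  have hpath := hS _ ha _ hb
  rw [stairPath, if_pos (by simp)] at hpath
  exact hpath (Or.inr ⟨z, by simpa using hz, by simp⟩)

theorem snocProd_slice_subset (hS : StairConvex S) {p : Fin (n + 1) → ℝ} (hp : p ∈ S)
    {a b : ℝ} (hbp : b ≤ p (Fin.last n)) : snocProd (slice S a) (Ico a b) ⊆ S := by
  rintro f ⟨hf, hfa, hfb⟩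
  simpa only [slice, mem_ofPred_eq, Fin.snoc_init_self] using
    hS.slice_subset_slice hp hfa (hfb.le.trans hbp) hf

theorem inter_snocProd_subset (hS : StairConvex S) {p : Fin (n + 1) → ℝ} (hp : p ∈ S)
    {a b : ℝ} (hbp : b ≤ p (Fin.last n)) :
    S ∩ snocProd univ (Ico a b) ⊆ snocProd (slice S b) (Ico a b) := by
  rintro f ⟨hf, -, hfI⟩
  refine ⟨hS.slice_subset_slice hp hfI.2.le hbp ?_, hfI⟩
  simpa only [slice, mem_ofPred_eq, Fin.snoc_init_self] using hf

theorem toReal_volume_slice_mul_le_toReal_volume_inter (hsc : StairConvex S)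
    (hS : S ⊆ Icc 0 1) {p : Fin (n + 1) → ℝ} (hp : p ∈ S) {a b : ℝ} (hab : a ≤ b)
    (hbp : b ≤ p (Fin.last n)) :
    (volume (slice S a)).toReal * (b - a) ≤ (volume (S ∩ snocProd univ (Ico a b))).toReal :=
  toReal_volume_mul_le_of_snocProd_subset hab
    (volume_ne_top_of_subset_Icc (inter_subset_left.trans hS))
    (subset_inter (hsc.snocProd_slice_subset hp hbp) fun _ hf => ⟨mem_univ _, hf.2⟩)

theorem toReal_volume_inter_le_toReal_volume_slice_mul (hsc : StairConvex S)
    (hS : S ⊆ Icc 0 1) {p : Fin (n + 1) → ℝ} (hp : p ∈ S) {a b : ℝ} (hab : a ≤ b)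
    (hbp : b ≤ p (Fin.last n)) :
    (volume (S ∩ snocProd univ (Ico a b))).toReal ≤ (volume (slice S b)).toReal * (b - a) :=
  toReal_volume_le_mul_of_subset_snocProd hab (hsc.inter_snocProd_subset hp hbp)
    (volume_ne_top_of_subset_Icc (slice_subset_Icc hS _))

theorem abs_sum_volume_slice_sub_le_one (hsc : StairConvex S) (hS : S ⊆ Icc 0 1) {N : ℕ}
    (hN : 0 < N) :
    |∑ j ∈ Finset.range (N + 1), (volume (slice S (j / N))).toReal - N * (volume S).toReal|
      ≤ 1 := by
  rcases S.eq_empty_or_nonempty with rfl | ⟨p, hp⟩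
  · simp [slice]
  have hN' : (0 : ℝ) < N := by exact_mod_cast hN
  set t : ℕ → ℝ := fun j => j / N
  have hmono : Monotone t := fun i j h => by dsimp [t]; gcongr
  have hwidth : ∀ j, t (j + 1) - t j = 1 / N := fun j => by simp only [t]; push_cast; ring
  have hfin : ∀ j, volume (S ∩ snocProd univ (Ico (t j) (t (j + 1)))) ≠ ⊤ := fun j =>
    volume_ne_top_of_subset_Icc (inter_subset_left.trans hS)
  -- `k` is the highest level reached by `S`: below it every slab is squeezed between the
  -- cylinders over its bounding slices, above it all slices and slabs are empty.
  obtain ⟨k, hkN, hgood, hbad⟩ := exists_threshold_of_antitone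
    (P := fun j => ∃ q ∈ S, t j ≤ q (Fin.last n))
    (fun i j h ⟨q, hq, hjq⟩ => ⟨q, hq, (hmono h).trans hjq⟩)
    ⟨p, hp, by simpa [t] using (hS hp).1 _⟩ N
  rw [volume_eq_sum_volume_inter_snocProd_Ico hN hS,
    ENNReal.toReal_sum fun j _ => hfin j, Finset.mul_sum]
  refine abs_sum_range_sub_sum_range_le_one hkN ENNReal.toReal_nonneg
    (toReal_volume_le_one (slice_subset_Icc hS _)) (by positivity) ?_ ?_ ?_ ?_ ?_
  · have := toReal_volume_le_mul_of_subset_snocProd (hmono k.le_succ) (A := Icc 0 1)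
      (inter_snocProd_subset_Icc hS _) (volume_ne_top_of_subset_Icc subset_rfl)
    rwa [volume_Icc_zero_one, ENNReal.toReal_one, hwidth, one_mul, le_div_iff₀' hN'] at this
  · intro j hj
    obtain ⟨q, hq, hjq⟩ := hgood (j + 1) hj
    have := hsc.toReal_volume_slice_mul_le_toReal_volume_inter hS hq (hmono j.le_succ) hjq
    rwa [hwidth, mul_one_div, div_le_iff₀' hN'] at this
  · intro j hj
    obtain ⟨q, hq, hjq⟩ := hgood (j + 1) hj
    have := hsc.toReal_volume_inter_le_toReal_volume_slice_mul hS hq (hmono j.le_succ) hjq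
    rwa [hwidth, mul_one_div, le_div_iff₀' hN'] at this
  · intro j hj
    have : slice S (j / N) = ∅ :=
      eq_empty_of_forall_notMem fun x hx => hbad j hj ⟨_, hx, by simp [t]⟩
    simp [this]
  · intro j hj
    have : S ∩ snocProd univ (Ico (t j) (t (j + 1))) = ∅ :=
      eq_empty_of_forall_notMem fun f ⟨hf, _, hfI⟩ => hbad j hj ⟨f, hf, hfI.1⟩
    simp [this]

end StairConvex

lemma injective_div_sub_one (m : ℕ) : Injective fun k : Fin m => (k : ℝ) / (m - 1) := by
  intro a b h
  by_cases hm : (m : ℝ) - 1 = 0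
  · have : m = 1 := by exact_mod_cast sub_eq_zero.1 hm
    subst this
    exact Subsingleton.elim a b
  · exact Fin.ext (by exact_mod_cast (div_left_inj' hm).1 h)

open Classical in
lemma card_filter_uniformGrid (d m : ℕ) (P : (Fin d → ℝ) → Prop) :
    ((uniformGrid d m).filter P).card =
      ∑ f : Fin d → Fin m, if P ((fun k : Fin m => (k : ℝ) / (m - 1)) ∘ f) then 1 else 0 := by
  rw [uniformGrid, Finset.filter_image, Finset.card_image_of_injective _ ?_, Finset.card_filter]
  · rfl
  · exact (injective_div_sub_one m).comp_left

open Classical in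
lemma card_filter_uniformGrid_succ (n m : ℕ) (S : Set (Fin (n + 1) → ℝ)) :
    ((uniformGrid (n + 1) m).filter (· ∈ S)).card =
      ∑ j ∈ Finset.range m, ((uniformGrid n m).filter (· ∈ slice S (j / (m - 1)))).card := by
  simp_rw [card_filter_uniformGrid]
  rw [← (Fin.snocEquiv _).sum_comp, Fintype.sum_prod_type, ← Fin.sum_univ_eq_sum_range]
  simp only [Fin.snocEquiv, Equiv.coe_fn_mk, Fin.comp_snoc, slice, mem_ofPred_eq]
  rfl

open Classical in
lemma card_filter_uniformGrid_zero (m : ℕ) (S : Set (Fin 0 → ℝ)) :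
    (((uniformGrid 0 m).filter (· ∈ S)).card : ℝ) = (volume S).toReal := by
  rw [card_filter_uniformGrid, volume_pi, Measure.pi_of_empty,
    Measure.dirac_apply' _ (Subsingleton.measurableSet)]
  simp only [indicator, Subsingleton.elim _ (isEmptyElim : Fin 0 → ℝ)]
  split_ifs <;> simp

open Classical in
theorem stairConvex_grid_approximation_general (d m : ℕ) (hm : 2 ≤ m)
    (S : Set (Fin d → ℝ)) (hS : S ⊆ Set.Icc 0 1) (hsc : StairConvex S) :
    |(((uniformGrid d m).filter (fun p => p ∈ S)).card : ℝ) -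
        ((m : ℝ) - 1) ^ d * (MeasureTheory.volume S).toReal| ≤
      (d : ℝ) * (m : ℝ) ^ (d - 1) := by
  induction d with
  | zero => simp [card_filter_uniformGrid_zero]
  | succ n ih =>
    have hm' : (1 : ℝ) ≤ m - 1 := by
      rw [le_sub_iff_add_le]; exact_mod_cast hm
    have hslab := hsc.abs_sum_volume_slice_sub_le_one hS (N := m - 1) (by omega)
    rw [Nat.cast_pred (by omega), Nat.sub_add_cancel (by omega)] at hslab
    have hsum := abs_sum_sub_mul_le (Finset.range m) (pow_nonneg (zero_le_one.trans hm') n)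
      (fun j _ => ih _ (slice_subset_Icc hS _) (hsc.slice _)) hslab
    rw [card_filter_uniformGrid_succ, Nat.cast_sum, pow_succ, mul_assoc]
    refine hsum.trans ?_
    have hpow : (m : ℝ) * (n * m ^ (n - 1)) = n * m ^ n := by
      cases n <;> simp [pow_succ]; ring
    have hpow_le := pow_le_pow_left₀ (zero_le_one.trans hm') (sub_le_self (m : ℝ) zero_le_one) n
    simp only [Finset.card_range, Nat.add_sub_cancel]
    push_cast
    linarith

open Classical in
/-- Grid approximation: for a stair-convex `S ⊆ [0,1]^d`, the number `g_S` of points of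
the uniform grid `Gu(m)` in `S` satisfies `|g_S - (m-1)^d·vol(S)| ≤ d·m^(d-1)`. -/
theorem stairConvex_grid_approximation (d m : ℕ) (hd : 1 ≤ d) (hm : 2 ≤ m)
    (S : Set (Fin d → ℝ)) (hS : S ⊆ Set.Icc 0 1) (hsc : StairConvex S) :
    |(((uniformGrid d m).filter (fun p => p ∈ S)).card : ℝ) -
        ((m : ℝ) - 1) ^ d * (MeasureTheory.volume S).toReal| ≤
      (d : ℝ) * (m : ℝ) ^ (d - 1) :=
  stairConvex_grid_approximation_general d m hm S hS hsc
end
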